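/- On a paracontact metric manifold M^{2n+1} the following formulas hold: (∇_ξ h)X = −φX + h²φX + φR(ξ, X)ξ, and R(ξ, X)ξ + φR(ξ, φX)ξ = 2φ²X − 2h²X. -/
import Mathlib


/-!
An abstract formalization of (almost) paracontact metric geometry.

We axiomatize the algebra `C` of smooth functions (a commutative `ℝ`-algebra),
the `C`-module `V` of vector fields together with the derivation action of
vector fields on functions and the Lie bracket, a pseudo-Riemannian metric `g`
with its Levi-Civita connection `nabla` (characterized by being torsion-free
and metric), and the almost paracontact structure tensors `(φ, ξ, η)`.
Traces (Ricci and scalar curvatures, square norms of tensors) are computed with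
respect to a `φ`-basis `(eᵢ, φ eᵢ, ξ)`, `i = 1, …, n`, adapted to the signature
`(n+1, n)`.
-/

noncomputable section

/-- Abstract calculus of vector fields: an `ℝ`-algebra `C` of "smooth functions",
a `C`-module `V` of "vector fields", the derivation action `act` of vector fields
on functions, and the Lie bracket. -/
structure VectorFieldCalculus (C V : Type*) [CommRing C] [Algebra ℝ C]
    [AddCommGroup V] [Module C V] [Module ℝ V] [IsScalarTower ℝ C V] where
  act : V → C → C
  act_add_left : ∀ X Y f, act (X + Y) f = act X f + act Y f
  act_smul_left : ∀ (f : C) (X : V) (u : C), act (f • X) u = f * act X u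
  act_add_right : ∀ X f g, act X (f + g) = act X f + act X g
  act_mul : ∀ X f g, act X (f * g) = f * act X g + g * act X f
  act_algebraMap : ∀ X (r : ℝ), act X (algebraMap ℝ C r) = 0
  bracket : V → V → V
  bracket_antisymm : ∀ X Y, bracket X Y = - bracket Y X
  bracket_add_left : ∀ X Y Z, bracket (X + Y) Z = bracket X Z + bracket Y Z
  bracket_act : ∀ X Y f, act (bracket X Y) f = act X (act Y f) - act Y (act X f)
  bracket_smul_right : ∀ X (f : C) Y, bracket X (f • Y) = act X f • Y + f • bracket X Y
  jacobi : ∀ X Y Z,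
    bracket X (bracket Y Z) + bracket Y (bracket Z X) + bracket Z (bracket X Y) = 0

/-- An almost paracontact structure `(φ, ξ, η)`: `φ ξ = 0`, `η ∘ φ = 0`,
`η(ξ) = 1` and `φ² = id − η ⊗ ξ`. -/
structure AlmostParacontact (C V : Type*) [CommRing C] [Algebra ℝ C]
    [AddCommGroup V] [Module C V] [Module ℝ V] [IsScalarTower ℝ C V]
    extends VectorFieldCalculus C V where
  phi : V → V
  phi_add : ∀ X Y, phi (X + Y) = phi X + phi Y
  phi_smul : ∀ (f : C) X, phi (f • X) = f • phi X
  xi : V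
  eta : V → C
  eta_add : ∀ X Y, eta (X + Y) = eta X + eta Y
  eta_smul : ∀ (f : C) X, eta (f • X) = f * eta X
  phi_xi : phi xi = 0
  eta_phi : ∀ X, eta (phi X) = 0
  eta_xi : eta xi = 1
  phi_phi : ∀ X, phi (phi X) = X - eta X • xi

namespace AlmostParacontact

variable {C V : Type*} [CommRing C] [Algebra ℝ C]
  [AddCommGroup V] [Module C V] [Module ℝ V] [IsScalarTower ℝ C V]
  (P : AlmostParacontact C V)

/-- `2 dη(X,Y) = X(η Y) − Y(η X) − η [X,Y]`. -/
def twoDEta (X Y : V) : C :=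
  P.act X (P.eta Y) - P.act Y (P.eta X) - P.eta (P.bracket X Y)

/-- `dη(X,Y) = ½ (X(η Y) − Y(η X) − η [X,Y])`. -/
def dEta (X Y : V) : C := (2⁻¹ : ℝ) • P.twoDEta X Y

/-- The Nijenhuis tensor of `φ`. -/
def Nphi (X Y : V) : V :=
  P.bracket (P.phi X) (P.phi Y) - P.phi (P.bracket (P.phi X) Y)
    - P.phi (P.bracket X (P.phi Y)) + P.bracket X Y

/-- `N⁽¹⁾(X,Y) = N_φ(X,Y) − 2 dη(X,Y) ξ`. -/
def N1 (X Y : V) : V := P.Nphi X Y - P.twoDEta X Y • P.xi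

/-- `(L_X η)(Y)`. -/
def lieEta (X Y : V) : C := P.act X (P.eta Y) - P.eta (P.bracket X Y)

/-- `N⁽²⁾(X,Y) = (L_{φX} η)Y − (L_{φY} η)X`. -/
def N2 (X Y : V) : C := P.lieEta (P.phi X) Y - P.lieEta (P.phi Y) X

/-- `N⁽³⁾(X) = (L_ξ φ)X`. -/
def N3 (X : V) : V := P.bracket P.xi (P.phi X) - P.phi (P.bracket P.xi X)

/-- `N⁽⁴⁾(X) = (L_ξ η)X`. -/
def N4 (X : V) : C := P.lieEta P.xi X

/-- Integrability of the paracomplex structure `φ` on `D = ker η`: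
`N_φ(X,Y) = 0` and `[φX, Y] + [X, φY] ∈ D` for `X, Y ∈ D`. -/
def IsIntegrable : Prop :=
  (∀ X Y, P.eta X = 0 → P.eta Y = 0 → P.Nphi X Y = 0) ∧
  (∀ X Y, P.eta X = 0 → P.eta Y = 0 →
    P.eta (P.bracket (P.phi X) Y + P.bracket X (P.phi Y)) = 0)

end AlmostParacontact

/-- An almost paracontact metric structure on a `(2n+1)`-dimensional manifold:
a compatible metric `g` of signature `(n+1, n)` (encoded by a `φ`-basis
`(eᵢ, φ eᵢ, ξ)`), together with its Levi-Civita connection. -/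
structure AlmostParacontactMetric (n : ℕ) (C V : Type*) [CommRing C] [Algebra ℝ C]
    [AddCommGroup V] [Module C V] [Module ℝ V] [IsScalarTower ℝ C V]
    extends AlmostParacontact C V where
  g : V → V → C
  g_symm : ∀ X Y, g X Y = g Y X
  g_add_left : ∀ X Y Z, g (X + Y) Z = g X Z + g Y Z
  g_smul_left : ∀ (f : C) X Y, g (f • X) Y = f * g X Y
  g_nondeg : ∀ X, (∀ Y, g X Y = 0) → X = 0
  compatible : ∀ X Y, g (phi X) (phi Y) = - g X Y + eta X * eta Y
  nabla : V → V → V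
  nabla_add_left : ∀ X Y Z, nabla (X + Y) Z = nabla X Z + nabla Y Z
  nabla_smul_left : ∀ (f : C) X Y, nabla (f • X) Y = f • nabla X Y
  nabla_add_right : ∀ X Y Z, nabla X (Y + Z) = nabla X Y + nabla X Z
  nabla_smul_right : ∀ X (f : C) Y, nabla X (f • Y) = act X f • Y + f • nabla X Y
  torsion_free : ∀ X Y, nabla X Y - nabla Y X = bracket X Y
  nabla_metric : ∀ X Y Z, act X (g Y Z) = g (nabla X Y) Z + g Y (nabla X Z)
  frame : Fin n → V
  frame_orth : ∀ i j, g (frame i) (frame j) = if i = j then 1 else 0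
  frame_phi : ∀ i j, g (frame i) (phi (frame j)) = 0
  frame_xi : ∀ i, g (frame i) xi = 0

namespace AlmostParacontactMetric

variable {n : ℕ} {C V : Type*} [CommRing C] [Algebra ℝ C]
  [AddCommGroup V] [Module C V] [Module ℝ V] [IsScalarTower ℝ C V]
  (P : AlmostParacontactMetric n C V)

/-- The fundamental 2-form `F(X,Y) = g(X, φY)`. -/
def F (X Y : V) : C := P.g X (P.phi Y)

/-- The exterior differential of the fundamental 2-form. -/
def dF (X Y Z : V) : C :=
  P.act X (P.F Y Z) + P.act Y (P.F Z X) + P.act Z (P.F X Y)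
    - P.F (P.bracket X Y) Z - P.F (P.bracket Z X) Y - P.F (P.bracket Y Z) X

/-- `(∇_X φ)Y`. -/
def nablaPhi (X Y : V) : V := P.nabla X (P.phi Y) - P.phi (P.nabla X Y)

/-- `h = ½ L_ξ φ`. -/
def h (X : V) : V := (2⁻¹ : ℝ) • P.toAlmostParacontact.N3 X

/-- `ξ` is a Killing vector field: `L_ξ g = 0`. -/
def IsKilling : Prop :=
  ∀ X Y, P.act P.xi (P.g X Y) - P.g (P.bracket P.xi X) Y - P.g X (P.bracket P.xi Y) = 0

/-- The curvature tensor `R(X,Y)Z = ∇_X ∇_Y Z − ∇_Y ∇_X Z − ∇_{[X,Y]} Z`. -/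
def R (X Y Z : V) : V :=
  P.nabla X (P.nabla Y Z) - P.nabla Y (P.nabla X Z) - P.nabla (P.bracket X Y) Z

/-- The (0,4)-curvature tensor `R(X,Y,Z,W) = g(R(X,Y)Z, W)`. -/
def Rm (X Y Z W : V) : C := P.g (P.R X Y Z) W

/-- The signed contraction `∑_a ε_a f(E_a)` over the `φ`-basis
`(eᵢ, φ eᵢ, ξ)` with signs `(+1, −1, +1)`. -/
def ctr (f : V → C) : C :=
  (∑ i : Fin n, f (P.frame i)) - (∑ i : Fin n, f (P.phi (P.frame i))) + f P.xi

/-- The Ricci tensor. -/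
def Ric (X Y : V) : C := P.ctr fun E => P.Rm E X Y E

/-- The scalar curvature. -/
def scal : C := P.ctr fun E => P.Ric E E

/-- The *-Ricci tensor `Ric*_{ij} = g^{ps} R_{pilk} φ^l_j φ^k_s`. -/
def RicStar (X Y : V) : C := P.ctr fun E => P.Rm E X (P.phi Y) (P.phi E)

/-- The *-scalar curvature. -/
def scalStar : C := P.ctr fun E => P.RicStar E E

/-- The square norm `|A|² = ∑ ε_a ε_b g(A E_a, E_b)²` of a (1,1)-tensor. -/
def normSqOp (A : V → V) : C := P.ctr fun E => P.ctr fun E' => (P.g (A E) E') ^ 2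

/-- The tensor `P_{rsi} = ∇_r φ_{si} − η_i g_{rs} + η_s g_{ri}`. -/
def Pten (X Y Z : V) : C :=
  P.g Y (P.nablaPhi X Z) - P.eta Z * P.g X Y + P.eta Y * P.g X Z

/-- The square norm `|P|²`. -/
def normSqP : C := P.ctr fun A => P.ctr fun B => P.ctr fun I => (P.Pten A B I) ^ 2

/-- `|P(X)|² = P_{rsi} P^{rs}_j X^i X^j`. -/
def normSqPX (X : V) : C := P.ctr fun A => P.ctr fun B => (P.Pten A B X) ^ 2

/-- The square norm `|∇φ|²`. -/
def normSqNablaPhi : C :=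
  P.ctr fun A => P.ctr fun B => P.ctr fun I => (P.g B (P.nablaPhi A I)) ^ 2

/-- The paracontact condition `g(X, φY) = dη(X,Y)`. -/
def IsParacontact : Prop := ∀ X Y, P.g X (P.phi Y) = P.toAlmostParacontact.dEta X Y

/-- Normality: `N⁽¹⁾ = 0`. -/
def IsNormal : Prop := ∀ X Y, P.toAlmostParacontact.N1 X Y = 0

/-- The canonical paracontact connection
`∇̃_X Y = ∇_X Y + η(X) φY − η(Y) ∇_X ξ + (∇_X η)(Y) ξ`. -/
def can (X Y : V) : V :=
  P.nabla X Y + P.eta X • P.phi Y - P.eta Y • P.nabla X P.xi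
    + (P.act X (P.eta Y) - P.eta (P.nabla X Y)) • P.xi

/-- The torsion of the canonical paracontact connection. -/
def canTor (X Y : V) : V := P.can X Y - P.can Y X - P.bracket X Y

/-- `D` is a linear connection on `V`. -/
def IsConnection (D : V → V → V) : Prop :=
  (∀ X Y Z, D (X + Y) Z = D X Z + D Y Z) ∧
  (∀ (f : C) X Y, D (f • X) Y = f • D X Y) ∧
  (∀ X Y Z, D X (Y + Z) = D X Y + D X Z) ∧
  (∀ X (f : C) Y, D X (f • Y) = P.act X f • Y + f • D X Y)

/-- `D` is almost paracontact: `Dg = Dη = Dφ = 0`. -/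
def PreservesStructure (D : V → V → V) : Prop :=
  (∀ X Y Z, P.act X (P.g Y Z) = P.g (D X Y) Z + P.g Y (D X Z)) ∧
  (∀ X Y, P.act X (P.eta Y) = P.eta (D X Y)) ∧
  (∀ X Y, D X (P.phi Y) = P.phi (D X Y))

/-- The torsion 3-tensor `T(X,Y,Z) = g(D_X Y − D_Y X − [X,Y], Z)` of a connection. -/
def torsion (D : V → V → V) (X Y Z : V) : C := P.g (D X Y - D Y X - P.bracket X Y) Z

/-- The torsion of `D` is a 3-form (totally skew-symmetric). -/
def HasSkewTorsion (D : V → V → V) : Prop :=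
  ∀ X Y Z, P.torsion D X Y Z = - P.torsion D X Z Y

/-- An almost paracontact linear connection with totally skew-symmetric torsion. -/
def AdmissibleConnection (D : V → V → V) : Prop :=
  P.IsConnection D ∧ P.PreservesStructure D ∧ P.HasSkewTorsion D

/-- The 3-form `T = 2 η ∧ dη + d^φ F − N⁽¹⁾ + η ∧ (ξ ⌟ N⁽¹⁾)`. -/
def Ttor (X Y Z : V) : C :=
  2 * (P.eta X * P.toAlmostParacontact.dEta Y Z
      + P.eta Y * P.toAlmostParacontact.dEta Z X
      + P.eta Z * P.toAlmostParacontact.dEta X Y)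
    - P.dF (P.phi X) (P.phi Y) (P.phi Z)
    - P.g (P.toAlmostParacontact.N1 X Y) Z
    + P.eta X * P.g (P.toAlmostParacontact.N1 P.xi Y) Z
    + P.eta Y * P.g (P.toAlmostParacontact.N1 P.xi Z) X
    + P.eta Z * P.g (P.toAlmostParacontact.N1 P.xi X) Y

/-- The gradient of a function, w.r.t. the `φ`-basis. -/
def grad (f : C) : V :=
  (∑ i : Fin n, P.act (P.frame i) f • P.frame i)
    - (∑ i : Fin n, P.act (P.phi (P.frame i)) f • P.phi (P.frame i))
    + P.act P.xi f • P.xi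

/-- The (hyperbolic) Laplacian `Δ f = ∑ ε_a (E_a(E_a f) − (∇_{E_a} E_a) f)`. -/
def lap (f : C) : C := P.ctr fun E => P.act E (P.act E f) - P.act (P.nabla E E) f

/-- The sub-Laplacian `Δ_D f = Δ f − ξ(ξ f)`. -/
def lapD (f : C) : C := P.lap f - P.act P.xi (P.act P.xi f)

/-- `|df|²`. -/
def normSqdf (f : C) : C := P.ctr fun E => (P.act E f) ^ 2

/-- `|df|²_D = |df|² − (ξ f)²`. -/
def normSqdfD (f : C) : C := P.normSqdf f - (P.act P.xi f) ^ 2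

/-- The scalar curvature of the canonical paracontact connection,
`W₁ = scal − Ric(ξ,ξ) − 4n`. -/
def W1 : C := P.scal - P.Ric P.xi P.xi - ((4 * n : ℕ) : C)

end AlmostParacontactMetric

section Aux

variable {n : ℕ} {C V : Type*} [CommRing C] [Algebra ℝ C] [AddCommGroup V] [Module C V]
  [Module ℝ V] [IsScalarTower ℝ C V]

private lemma half_cancel {M : Type*} [AddCommMonoid M] [Module ℝ M] {x y : M}
    (h : x + x = y + y) : x = y := by
  have h2 : (2:ℝ) • x = (2:ℝ) • y := by rw [two_smul, two_smul]; exact h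
  calc x = (2⁻¹:ℝ) • ((2:ℝ) • x) := by rw [smul_smul]; norm_num
    _ = (2⁻¹:ℝ) • ((2:ℝ) • y) := by rw [h2]
    _ = y := by rw [smul_smul]; norm_num

namespace AlmostParacontactMetric

variable (P : AlmostParacontactMetric n C V)

/- ## act toolkit -/

lemma act_zero' (X : V) : P.act X (0:C) = 0 := by
  have h := P.act_add_right X 0 0
  rw [add_zero] at h
  exact left_eq_add.mp h

lemma act_neg' (X : V) (f : C) : P.act X (-f) = - P.act X f := by
  have h := P.act_add_right X f (-f)
  rw [add_neg_cancel, P.act_zero'] at h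
  exact (eq_neg_of_add_eq_zero_right h.symm)

lemma act_sub' (X : V) (f g : C) : P.act X (f - g) = P.act X f - P.act X g := by
  rw [sub_eq_add_neg, P.act_add_right, P.act_neg', sub_eq_add_neg]

lemma act_one' (X : V) : P.act X (1:C) = 0 := by
  have h := P.act_mul X 1 1
  rw [mul_one, one_mul] at h
  exact left_eq_add.mp h

lemma act_real_smul (X : V) (r : ℝ) (f : C) : P.act X (r • f) = r • P.act X f := by
  rw [Algebra.smul_def, P.act_mul, P.act_algebraMap, mul_zero, add_zero, ← Algebra.smul_def]

/- ## eta toolkit -/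

lemma eta_zero' : P.eta (0:V) = 0 := by
  have h := P.eta_add 0 0
  rw [add_zero] at h
  exact left_eq_add.mp h

lemma eta_neg' (X : V) : P.eta (-X) = - P.eta X := by
  have h := P.eta_add X (-X)
  rw [add_neg_cancel, P.eta_zero'] at h
  exact (eq_neg_of_add_eq_zero_right h.symm)

lemma eta_sub' (X Y : V) : P.eta (X - Y) = P.eta X - P.eta Y := by
  rw [sub_eq_add_neg, P.eta_add, P.eta_neg', sub_eq_add_neg]

/- ## phi toolkit -/

lemma phi_zero' : P.phi (0:V) = 0 := by
  have h := P.phi_add 0 0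
  rw [add_zero] at h
  exact left_eq_add.mp h

lemma phi_neg' (X : V) : P.phi (-X) = - P.phi X := by
  have h := P.phi_add X (-X)
  rw [add_neg_cancel, P.phi_zero'] at h
  exact (eq_neg_of_add_eq_zero_right h.symm)

lemma phi_sub' (X Y : V) : P.phi (X - Y) = P.phi X - P.phi Y := by
  rw [sub_eq_add_neg, P.phi_add, P.phi_neg', sub_eq_add_neg]

lemma phi_real_smul (r : ℝ) (X : V) : P.phi (r • X) = r • P.phi X := by
  rw [← algebraMap_smul C r X, P.phi_smul, algebraMap_smul]

/- ## g toolkit -/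

lemma g_zero_left (X : V) : P.g 0 X = 0 := by
  have h := P.g_add_left 0 0 X
  rw [add_zero] at h
  exact left_eq_add.mp h

lemma g_zero_right (X : V) : P.g X 0 = 0 := by rw [P.g_symm, P.g_zero_left]

lemma g_add_right (X Y Z : V) : P.g X (Y + Z) = P.g X Y + P.g X Z := by
  rw [P.g_symm, P.g_add_left, P.g_symm Y X, P.g_symm Z X]

lemma g_neg_left (X Y : V) : P.g (-X) Y = - P.g X Y := by
  have h := P.g_add_left X (-X) Y
  rw [add_neg_cancel, P.g_zero_left] at h
  exact (eq_neg_of_add_eq_zero_right h.symm)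

lemma g_neg_right (X Y : V) : P.g X (-Y) = - P.g X Y := by
  rw [P.g_symm, P.g_neg_left, P.g_symm]

lemma g_sub_left (X Y Z : V) : P.g (X - Y) Z = P.g X Z - P.g Y Z := by
  rw [sub_eq_add_neg, P.g_add_left, P.g_neg_left, sub_eq_add_neg]

lemma g_sub_right (X Y Z : V) : P.g X (Y - Z) = P.g X Y - P.g X Z := by
  rw [P.g_symm, P.g_sub_left, P.g_symm Y X, P.g_symm Z X]

lemma g_smul_right (X : V) (f : C) (Y : V) : P.g X (f • Y) = f * P.g X Y := by
  rw [P.g_symm, P.g_smul_left, P.g_symm]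

lemma g_ext {X Y : V} (h : ∀ Z, P.g X Z = P.g Y Z) : X = Y := by
  have h2 : ∀ Z, P.g (X - Y) Z = 0 := fun Z => by rw [P.g_sub_left, h Z, sub_self]
  have := P.g_nondeg _ h2
  exact sub_eq_zero.mp this

/- ## bracket toolkit -/

lemma bracket_add_right' (X Y Z : V) :
    P.bracket X (Y + Z) = P.bracket X Y + P.bracket X Z := by
  rw [P.bracket_antisymm, P.bracket_add_left, neg_add,
    ← P.bracket_antisymm, ← P.bracket_antisymm]

lemma bracket_zero_right (X : V) : P.bracket X 0 = 0 := by
  have h := P.bracket_smul_right X (0:C) 0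
  rw [zero_smul, P.act_zero', zero_smul, zero_smul, add_zero] at h
  exact h

lemma bracket_zero_left (X : V) : P.bracket 0 X = 0 := by
  rw [P.bracket_antisymm, P.bracket_zero_right, neg_zero]

lemma bracket_neg_right (X Y : V) : P.bracket X (-Y) = - P.bracket X Y := by
  have h := P.bracket_add_right' X Y (-Y)
  rw [add_neg_cancel, P.bracket_zero_right] at h
  exact (eq_neg_of_add_eq_zero_right h.symm)

lemma bracket_sub_right (X Y Z : V) :
    P.bracket X (Y - Z) = P.bracket X Y - P.bracket X Z := by
  rw [sub_eq_add_neg, P.bracket_add_right', P.bracket_neg_right, sub_eq_add_neg]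

lemma bracket_self (X : V) : P.bracket X X = 0 := by
  rw [← P.torsion_free, sub_self]

/- ## nabla toolkit -/

lemma nabla_zero_right (X : V) : P.nabla X 0 = 0 := by
  have h := P.nabla_smul_right X (0:C) 0
  rw [zero_smul, P.act_zero', zero_smul, zero_smul, add_zero] at h
  exact h

lemma nabla_neg_right (X Y : V) : P.nabla X (-Y) = - P.nabla X Y := by
  have h := P.nabla_add_right X Y (-Y)
  rw [add_neg_cancel, P.nabla_zero_right] at h
  exact (eq_neg_of_add_eq_zero_right h.symm)

lemma nabla_sub_right (X Y Z : V) :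
    P.nabla X (Y - Z) = P.nabla X Y - P.nabla X Z := by
  rw [sub_eq_add_neg, P.nabla_add_right, P.nabla_neg_right, sub_eq_add_neg]

/- ## core geometric lemmas -/

lemma g_xi (X : V) : P.g X P.xi = P.eta X := by
  have h := P.compatible X P.xi
  rw [P.phi_xi, P.g_zero_right, P.eta_xi, mul_one] at h
  linear_combination h

lemma g_xi_xi : P.g P.xi P.xi = 1 := by rw [P.g_xi, P.eta_xi]

lemma g_phi_skew (X Y : V) : P.g (P.phi X) Y = - P.g X (P.phi Y) := by
  have h := P.compatible X (P.phi Y)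
  rw [P.phi_phi, P.eta_phi, mul_zero, P.g_sub_right, P.g_smul_right, P.g_xi,
    P.eta_phi, mul_zero, sub_zero] at h
  linear_combination h

lemma pc2 (hP : P.IsParacontact) (X Y : V) :
    P.toAlmostParacontact.twoDEta X Y = P.g X (P.phi Y) + P.g X (P.phi Y) := by
  have h := hP X Y
  unfold AlmostParacontact.dEta at h
  calc P.toAlmostParacontact.twoDEta X Y
      = (1:ℝ) • P.toAlmostParacontact.twoDEta X Y := (one_smul ℝ _).symm
    _ = ((2:ℝ) * 2⁻¹) • P.toAlmostParacontact.twoDEta X Y := by norm_num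
    _ = (2:ℝ) • ((2⁻¹:ℝ) • P.toAlmostParacontact.twoDEta X Y) := by rw [mul_smul]
    _ = (2:ℝ) • (P.g X (P.phi Y)) := by rw [← h]
    _ = P.g X (P.phi Y) + P.g X (P.phi Y) := two_smul ℝ _

lemma TD_nabla (X Y : V) :
    P.toAlmostParacontact.twoDEta X Y
      = P.g Y (P.nabla X P.xi) - P.g X (P.nabla Y P.xi) := by
  unfold AlmostParacontact.twoDEta
  have aX := P.nabla_metric X Y P.xi
  have aY := P.nabla_metric Y X P.xi
  have br : P.eta (P.bracket X Y) = P.g (P.nabla X Y) P.xi - P.g (P.nabla Y X) P.xi := by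
    rw [← P.g_xi, ← P.torsion_free, P.g_sub_left]
  have eX : P.eta X = P.g X P.xi := (P.g_xi X).symm
  have eY : P.eta Y = P.g Y P.xi := (P.g_xi Y).symm
  rw [eX, eY, br]
  linear_combination aX - aY

lemma A_xi_norm (X : V) : P.g (P.nabla X P.xi) P.xi = 0 := by
  have h := P.nabla_metric X P.xi P.xi
  rw [P.g_xi_xi, P.act_one', P.g_symm P.xi (P.nabla X P.xi)] at h
  have h' : P.g (P.nabla X P.xi) P.xi + P.g (P.nabla X P.xi) P.xi = 0 + 0 := by
    linear_combination -h
  exact half_cancel h'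

lemma nabla_xi_xi (hP : P.IsParacontact) : P.nabla P.xi P.xi = 0 := by
  apply P.g_ext; intro Z
  rw [P.g_zero_left, P.g_symm]
  have t := P.TD_nabla P.xi Z
  have p := P.pc2 hP P.xi Z
  have e1 : P.g P.xi (P.phi Z) = 0 := by rw [P.g_symm, P.g_xi, P.eta_phi]
  have e2 : P.g P.xi (P.nabla Z P.xi) = 0 := by rw [P.g_symm]; exact P.A_xi_norm Z
  linear_combination -t + p + 2*e1 + e2

lemma act_xi_eta (hP : P.IsParacontact) (Y : V) :
    P.act P.xi (P.eta Y) = P.eta (P.bracket P.xi Y) := by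
  have m := P.nabla_metric P.xi Y P.xi
  rw [P.nabla_xi_xi hP, P.g_zero_right, add_zero] at m
  have br : P.eta (P.bracket P.xi Y)
      = P.g (P.nabla P.xi Y) P.xi - P.g (P.nabla Y P.xi) P.xi := by
    rw [← P.g_xi, ← P.torsion_free, P.g_sub_left]
  have e1' : P.act P.xi (P.eta Y) = P.act P.xi (P.g Y P.xi) := by rw [P.g_xi]
  linear_combination e1' + m - br + P.A_xi_norm Y

/- ## h lemmas -/

lemma h_def (X : V) :
    P.h X = (2⁻¹:ℝ) • (P.bracket P.xi (P.phi X) - P.phi (P.bracket P.xi X)) := rfl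

lemma h_two (X : V) :
    P.h X + P.h X = P.bracket P.xi (P.phi X) - P.phi (P.bracket P.xi X) := by
  rw [h_def, ← add_smul]
  norm_num

lemma h_add (X Y : V) : P.h (X + Y) = P.h X + P.h Y := by
  rw [h_def, h_def, h_def, P.phi_add, P.bracket_add_right', P.bracket_add_right',
    P.phi_add, ← smul_add]
  congr 1
  abel

lemma h_neg (X : V) : P.h (-X) = - P.h X := by
  rw [h_def, h_def, P.phi_neg', P.bracket_neg_right, P.bracket_neg_right,
    P.phi_neg', ← smul_neg]
  congr 1
  abel

lemma h_sub (X Y : V) : P.h (X - Y) = P.h X - P.h Y := by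
  rw [sub_eq_add_neg, P.h_add, P.h_neg, sub_eq_add_neg]

lemma h_xi : P.h P.xi = 0 := by
  rw [h_def, P.phi_xi, P.bracket_zero_right, P.bracket_self, P.phi_zero', sub_zero,
    smul_zero]

lemma eta_real_smul (r : ℝ) (X : V) : P.eta (r • X) = r • P.eta X := by
  rw [← algebraMap_smul C r X, P.eta_smul, ← Algebra.smul_def]

lemma g_h_xi (hP : P.IsParacontact) (X : V) : P.g (P.h X) P.xi = 0 := by
  rw [P.g_xi, h_def, P.eta_real_smul, P.eta_sub', P.eta_phi, sub_zero,
    ← P.act_xi_eta hP, P.eta_phi, P.act_zero', smul_zero]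

lemma eta_h (hP : P.IsParacontact) (X : V) : P.eta (P.h X) = 0 := by
  rw [← P.g_xi]; exact P.g_h_xi hP X

lemma phi2_h (hP : P.IsParacontact) (X : V) :
    P.phi (P.phi (P.h X)) = P.h X := by
  rw [P.phi_phi, P.eta_h hP, zero_smul, sub_zero]

lemma phi2 {X : V} (hX : P.eta X = 0) : P.phi (P.phi X) = X := by
  rw [P.phi_phi, hX, zero_smul, sub_zero]

/- ## the Lie derivative of g along ξ -/

def Lg (Y Z : V) : C :=
  P.act P.xi (P.g Y Z) - P.g (P.bracket P.xi Y) Z - P.g Y (P.bracket P.xi Z)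

lemma Lg_nabla (Y Z : V) :
    P.Lg Y Z = P.g (P.nabla Y P.xi) Z + P.g Y (P.nabla Z P.xi) := by
  unfold Lg
  have m := P.nabla_metric P.xi Y Z
  have b1 : P.g (P.bracket P.xi Y) Z
      = P.g (P.nabla P.xi Y) Z - P.g (P.nabla Y P.xi) Z := by
    rw [← P.torsion_free, P.g_sub_left]
  have b2 : P.g Y (P.bracket P.xi Z)
      = P.g Y (P.nabla P.xi Z) - P.g Y (P.nabla Z P.xi) := by
    rw [← P.torsion_free, P.g_sub_right]
  linear_combination m - b1 - b2

lemma Lg_symm (Y Z : V) : P.Lg Y Z = P.Lg Z Y := by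
  unfold Lg
  rw [P.g_symm Y Z, P.g_symm (P.bracket P.xi Y) Z, P.g_symm Y (P.bracket P.xi Z)]
  ring

lemma eta_jacobi (X Y Z : V) :
    P.eta (P.bracket X (P.bracket Y Z))
      = P.eta (P.bracket (P.bracket X Y) Z) + P.eta (P.bracket Y (P.bracket X Z)) := by
  have j := P.jacobi X Y Z
  have e : P.eta (P.bracket X (P.bracket Y Z)) + P.eta (P.bracket Y (P.bracket Z X))
      + P.eta (P.bracket Z (P.bracket X Y)) = 0 := by
    rw [← P.eta_add, ← P.eta_add, j, P.eta_zero']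
  rw [P.bracket_antisymm Z X, P.bracket_neg_right, P.eta_neg'] at e
  rw [P.bracket_antisymm Z (P.bracket X Y), P.eta_neg'] at e
  linear_combination e

lemma TD_lie (hP : P.IsParacontact) (Y Z : V) :
    P.act P.xi (P.toAlmostParacontact.twoDEta Y Z)
      - P.toAlmostParacontact.twoDEta (P.bracket P.xi Y) Z
      - P.toAlmostParacontact.twoDEta Y (P.bracket P.xi Z) = 0 := by
  unfold AlmostParacontact.twoDEta
  rw [P.act_sub', P.act_sub']
  have b1 := P.bracket_act P.xi Y (P.eta Z)
  have b2 := P.bracket_act P.xi Z (P.eta Y)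
  have e1 := P.act_xi_eta hP Z
  have e2 := P.act_xi_eta hP Y
  have e3 := P.act_xi_eta hP (P.bracket Y Z)
  have j := P.eta_jacobi P.xi Y Z
  have b1' : P.act (P.bracket P.xi Y) (P.eta Z)
      = P.act P.xi (P.act Y (P.eta Z)) - P.act Y (P.eta (P.bracket P.xi Z)) := by
    rw [b1, e1]
  have b2' : P.act (P.bracket P.xi Z) (P.eta Y)
      = P.act P.xi (P.act Z (P.eta Y)) - P.act Z (P.eta (P.bracket P.xi Y)) := by
    rw [b2, e2]
  linear_combination -b1' + b2' - e3 - j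

lemma LF_zero (hP : P.IsParacontact) (Y Z : V) :
    P.act P.xi (P.g Y (P.phi Z)) - P.g (P.bracket P.xi Y) (P.phi Z)
      - P.g Y (P.phi (P.bracket P.xi Z)) = 0 := by
  have t := P.TD_lie hP Y Z
  have p2 := P.pc2 hP (P.bracket P.xi Y) Z
  have p3 := P.pc2 hP Y (P.bracket P.xi Z)
  have a1 : P.act P.xi (P.toAlmostParacontact.twoDEta Y Z)
      = P.act P.xi (P.g Y (P.phi Z)) + P.act P.xi (P.g Y (P.phi Z)) := by
    rw [P.pc2 hP Y Z, P.act_add_right]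
  have big : (P.act P.xi (P.g Y (P.phi Z)) - P.g (P.bracket P.xi Y) (P.phi Z)
      - P.g Y (P.phi (P.bracket P.xi Z)))
      + (P.act P.xi (P.g Y (P.phi Z)) - P.g (P.bracket P.xi Y) (P.phi Z)
      - P.g Y (P.phi (P.bracket P.xi Z))) = 0 + 0 := by
    linear_combination t - a1 + p2 + p3
  exact half_cancel big

lemma star (hP : P.IsParacontact) (Y Z : V) :
    P.Lg Y (P.phi Z) = -(P.g Y (P.h Z) + P.g Y (P.h Z)) := by
  have lf := P.LF_zero hP Y Z
  have gh : P.g Y (P.h Z) + P.g Y (P.h Z)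
      = P.g Y (P.bracket P.xi (P.phi Z)) - P.g Y (P.phi (P.bracket P.xi Z)) := by
    rw [← P.g_add_right, P.h_two, P.g_sub_right]
  unfold Lg
  linear_combination lf + gh

lemma F6 (hP : P.IsParacontact) (Y Z : V) :
    P.Lg (P.phi Y) (P.phi Z) = - P.Lg Y Z
      - (P.g (P.h Y) (P.phi Z) + P.g (P.h Y) (P.phi Z))
      - (P.g (P.phi Y) (P.h Z) + P.g (P.phi Y) (P.h Z)) := by
  have c := P.compatible Y Z
  have ac : P.act P.xi (P.g (P.phi Y) (P.phi Z)) = - P.act P.xi (P.g Y Z)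
      + (P.eta (P.bracket P.xi Y) * P.eta Z + P.eta Y * P.eta (P.bracket P.xi Z)) := by
    rw [c, P.act_add_right, P.act_neg', P.act_mul, P.act_xi_eta hP, P.act_xi_eta hP]
    ring
  have hb : P.bracket P.xi (P.phi Y) = (P.h Y + P.h Y) + P.phi (P.bracket P.xi Y) := by
    rw [P.h_two]; abel
  have hbz : P.bracket P.xi (P.phi Z) = (P.h Z + P.h Z) + P.phi (P.bracket P.xi Z) := by
    rw [P.h_two]; abel
  have b1 : P.g (P.bracket P.xi (P.phi Y)) (P.phi Z)
      = (P.g (P.h Y) (P.phi Z) + P.g (P.h Y) (P.phi Z))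
        + (- P.g (P.bracket P.xi Y) Z + P.eta (P.bracket P.xi Y) * P.eta Z) := by
    rw [hb, P.g_add_left, P.g_add_left, P.compatible]
  have b2 : P.g (P.phi Y) (P.bracket P.xi (P.phi Z))
      = (P.g (P.phi Y) (P.h Z) + P.g (P.phi Y) (P.h Z))
        + (- P.g Y (P.bracket P.xi Z) + P.eta Y * P.eta (P.bracket P.xi Z)) := by
    rw [hbz, P.g_add_right, P.g_add_right, P.compatible]
  unfold Lg
  linear_combination ac - b1 - b2

lemma L2 (hP : P.IsParacontact) (Y Z : V) :
    P.Lg Y Z = -(P.g (P.h Y) (P.phi Z) + P.g (P.h Y) (P.phi Z)) := by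
  have f6 := P.F6 hP Y Z
  have s := P.star hP (P.phi Y) Z
  linear_combination f6 - s

lemma h_symm (hP : P.IsParacontact) (Y Z : V) :
    P.g (P.h Y) Z = P.g Y (P.h Z) := by
  have s := P.star hP Y Z
  have l := P.L2 hP Y (P.phi Z)
  have pp : P.g (P.h Y) (P.phi (P.phi Z)) = P.g (P.h Y) Z := by
    rw [P.phi_phi, P.g_sub_right, P.g_smul_right, P.g_h_xi hP, mul_zero, sub_zero]
  apply half_cancel
  linear_combination l - s - 2*pp

lemma h_phi (hP : P.IsParacontact) (Y : V) : P.h (P.phi Y) = - P.phi (P.h Y) := by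
  apply P.g_ext; intro Z
  rw [P.g_neg_left]
  have k : P.g (P.h Y) (P.phi Z) = P.g (P.h Z) (P.phi Y) := by
    have a := P.L2 hP Y Z
    have b := P.L2 hP Z Y
    have c := P.Lg_symm Y Z
    apply half_cancel
    linear_combination a - b - c
  calc P.g (P.h (P.phi Y)) Z = P.g (P.phi Y) (P.h Z) := P.h_symm hP (P.phi Y) Z
    _ = P.g (P.h Z) (P.phi Y) := P.g_symm _ _
    _ = P.g (P.h Y) (P.phi Z) := k.symm
    _ = - P.g (P.phi (P.h Y)) Z := by rw [P.g_phi_skew, neg_neg]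

lemma nabla_xi (hP : P.IsParacontact) (Y : V) :
    P.nabla Y P.xi = - P.phi Y + P.phi (P.h Y) := by
  apply P.g_ext; intro Z
  rw [P.g_add_left, P.g_neg_left]
  have t := P.TD_nabla Y Z
  have p := P.pc2 hP Y Z
  have l := P.Lg_nabla Y Z
  have l2 := P.L2 hP Y Z
  have sy : P.g Z (P.nabla Y P.xi) = P.g (P.nabla Y P.xi) Z := P.g_symm _ _
  have r1 := P.g_phi_skew Y Z
  have r2 := P.g_phi_skew (P.h Y) Z
  apply half_cancel
  linear_combination p - t - l + l2 - sy + 2*r1 - 2*r2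


lemma nabla_xi_phi (hP : P.IsParacontact) (Y : V) :
    P.nabla P.xi (P.phi Y) = P.phi (P.nabla P.xi Y) := by
  have tf := P.torsion_free P.xi (P.phi Y)
  have m := sub_eq_iff_eq_add.mp tf
  have hb : P.bracket P.xi (P.phi Y) = (P.h Y + P.h Y) + P.phi (P.bracket P.xi Y) := by
    rw [P.h_two]; abel
  rw [hb, P.nabla_xi hP (P.phi Y), P.h_phi hP Y, P.phi_neg', P.phi2_h hP Y] at m
  rw [← P.torsion_free P.xi Y, P.phi_sub', P.nabla_xi hP Y, P.phi_add, P.phi_neg',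
    P.phi2_h hP Y] at m
  rw [m]; abel

lemma eta_nabla_xi_h (hP : P.IsParacontact) (X : V) :
    P.eta (P.nabla P.xi (P.h X)) = 0 := by
  have m := P.nabla_metric P.xi (P.h X) P.xi
  rw [P.g_h_xi hP, P.act_zero', P.nabla_xi_xi hP, P.g_zero_right, add_zero] at m
  rw [← P.g_xi]
  exact m.symm

lemma R_xi (hP : P.IsParacontact) (X : V) :
    P.R P.xi X P.xi = P.phi (P.nabla P.xi (P.h X)) - P.phi (P.h (P.nabla P.xi X))
      + P.phi (P.phi X) - P.h (P.h X) := by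
  unfold R
  rw [P.nabla_xi_xi hP, P.nabla_zero_right, sub_zero, ← P.torsion_free P.xi X]
  rw [P.nabla_xi hP X, P.nabla_xi hP]
  simp only [P.nabla_add_right, P.nabla_neg_right, P.nabla_sub_right,
    P.nabla_xi_phi hP, P.h_sub, P.h_add, P.h_neg, P.h_phi hP,
    P.phi_sub', P.phi_add, P.phi_neg', P.phi2_h hP]
  abel


end AlmostParacontactMetric

end Aux


/-- On a paracontact metric manifold,
`(∇_ξ h)X = −φX + h²φX + φ R(ξ,X)ξ` and
`R(ξ,X)ξ + φ R(ξ,φX)ξ = 2φ²X − 2h²X`. -/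
theorem nabla_xi_h_and_curvature
    {n : ℕ} {C V : Type*} [CommRing C] [Algebra ℝ C] [AddCommGroup V] [Module C V]
    [Module ℝ V] [IsScalarTower ℝ C V]
    (P : AlmostParacontactMetric n C V) (hP : P.IsParacontact) :
    (∀ X, P.nabla P.xi (P.h X) - P.h (P.nabla P.xi X) =
        - P.phi X + P.h (P.h (P.phi X)) + P.phi (P.R P.xi X P.xi)) ∧
    (∀ X, P.R P.xi X P.xi + P.phi (P.R P.xi (P.phi X) P.xi) =
        (2 : C) • P.phi (P.phi X) - (2 : C) • P.h (P.h X)) := by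
  constructor
  · intro X
    rw [P.R_xi hP X]
    have e1 : P.h (P.h (P.phi X)) = P.phi (P.h (P.h X)) := by
      rw [P.h_phi hP X, P.h_neg, P.h_phi hP (P.h X), neg_neg]
    rw [e1]
    rw [P.phi_sub', P.phi_add, P.phi_sub']
    rw [P.phi2 (P.eta_nabla_xi_h hP X)]
    rw [P.phi2_h hP (P.nabla P.xi X)]
    rw [P.phi2 (P.eta_phi X)]
    abel
  · intro X
    rw [P.R_xi hP X, P.R_xi hP (P.phi X)]
    rw [P.h_phi hP X]
    rw [P.nabla_neg_right, P.nabla_xi_phi hP (P.h X)]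
    rw [P.nabla_xi_phi hP X]
    rw [P.h_neg, P.h_phi hP (P.h X)]
    rw [P.h_phi hP (P.nabla P.xi X)]
    simp only [P.phi_sub', P.phi_add, P.phi_neg', P.phi2_h hP]
    rw [P.phi2 (P.eta_nabla_xi_h hP X), P.phi2 (P.eta_phi X)]
    rw [two_smul, two_smul]
    abel
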